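/- Let n > 1 be an odd integer, let Γ be a finite connected pentavalent graph with exactly 4n vertices, and let G ≤ Aut Γ act arc-transitively on Γ. If N is a normal subgroup of G whose order is a power of 2, then |N| ≤ 2. -/

import Mathlib

/-! The stabiliser in `N` of a vertex `w` is a 2-group permuting the five neighbours of `w`, so it
fixes one of them; as it is normalised by `G_w`, which is transitive on these neighbours, it fixes
them all, and by connectivity it is trivial. If an edge joins two vertices of one `N`-orbit, then
arc-transitivity and normality put every edge inside an `N`-orbit, so `N` is transitive and `4n`
divides `|N|`, forcing `n = 1`. Otherwise `N` acts freely on the `10n` edges, so `|N|` divides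
`10n`, and `|N| ≤ 2` because `n` is odd. -/

/-- The automorphism group of a simple graph acts on its vertices. -/
instance graphAutMulAction {V : Type*} {Γ : SimpleGraph V} : MulAction (Γ ≃g Γ) V where
  smul g v := g v
  one_smul _ := rfl
  mul_smul _ _ _ := rfl

instance graphAutFaithfulSMul {V : Type*} {Γ : SimpleGraph V} : FaithfulSMul (Γ ≃g Γ) V :=
  ⟨fun h => RelIso.ext h⟩

instance Sym2.instMulAction {G α : Type*} [Group G] [MulAction G α] : MulAction G (Sym2 α) where
  smul g := Sym2.map (g • ·)
  one_smul e := by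
    change Sym2.map _ e = e
    simp only [one_smul, Sym2.map_id', id]
  mul_smul g h e := by
    change Sym2.map _ e = Sym2.map _ (Sym2.map _ e)
    simp only [Sym2.map_map, Function.comp_def, mul_smul]

namespace SimpleGraph

variable {V : Type*} {Γ : SimpleGraph V}

theorem Connected.induction_on_adj (hconn : Γ.Connected) {P : V → Prop}
    (hadj : ∀ ⦃u v⦄, Γ.Adj u v → P u → P v) {v : V} (hv : P v) (w : V) : P w := by
  induction (Γ.reachable_iff_reflTransGen v w).1 (hconn v w) with
  | refl => exact hv
  | tail _ huv ih => exact hadj huv ih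

theorem card_dvd_card_edgeSet_of_free {H : Type*} [Group H] [MulAction H V]
    (hH : ∀ (h : H) ⦃u v : V⦄, Γ.Adj u v → Γ.Adj (h • u) (h • v))
    (hfree : ∀ v : V, MulAction.stabilizer H v = ⊥)
    (hnot : ∀ (h : H) (v : V), ¬Γ.Adj v (h • v)) :
    Nat.card H ∣ Nat.card Γ.edgeSet := by
  let edges : SubMulAction H (Sym2 V) :=
    { carrier := Γ.edgeSet
      smul_mem' := fun h e => Sym2.ind (fun _ _ huv => hH h huv) e }
  have hfree_edges : ∀ e : edges, MulAction.stabilizer H e = ⊥ := by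
    rintro ⟨e, he⟩
    induction e using Sym2.ind with | _ a b => ?_
    refine (Subgroup.eq_bot_iff_forall _).2 fun h hh => ?_
    have hfix : s(h • a, h • b) = s(a, b) := congrArg Subtype.val hh
    rcases Sym2.eq_iff.1 hfix with ⟨ha, -⟩ | ⟨ha, -⟩
    · exact (Subgroup.eq_bot_iff_forall _).1 (hfree a) h ha
    · exact absurd (ha ▸ he : Γ.Adj a (h • a)) (hnot h a)
  change Nat.card H ∣ Nat.card edges
  rw [Nat.card_congr (MulAction.selfEquivOrbitsQuotientProd hfree_edges), Nat.card_prod]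
  exact dvd_mul_left _ _

theorem exists_adj_fixed_of_isPGroup {H : Type*} [Group H] [MulAction H V] {p : ℕ}
    [Fact p.Prime] (hp : IsPGroup p H)
    (hH : ∀ (h : H) ⦃u v : V⦄, Γ.Adj u v → Γ.Adj (h • u) (h • v))
    {w : V} (hw : ∀ h : H, h • w = w) (hdeg : ¬p ∣ Nat.card (Γ.neighborSet w)) :
    ∃ u, Γ.Adj w u ∧ ∀ h : H, h • u = u := by
  let nbrs : SubMulAction H V :=
    { carrier := Γ.neighborSet w
      smul_mem' := fun h u hu => by
        have := hH h hu
        rwa [hw] at this }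
  obtain ⟨⟨u, hu⟩, hfix⟩ := hp.nonempty_fixed_point_of_prime_not_dvd_card nbrs hdeg
  exact ⟨u, hu, fun h => congrArg Subtype.val (hfix h)⟩

structure IsArcTransitive (G : Type*) [Group G] [MulAction G V] (Γ : SimpleGraph V) : Prop where
  adj_smul : ∀ (g : G) ⦃u v : V⦄, Γ.Adj u v → Γ.Adj (g • u) (g • v)
  exists_smul_eq : ∀ ⦃u v u' v' : V⦄, Γ.Adj u v → Γ.Adj u' v' →
    ∃ g : G, g • u = u' ∧ g • v = v'

namespace IsArcTransitive

variable {G : Type*} [Group G] [MulAction G V] (hG : Γ.IsArcTransitive G)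
  {N : Subgroup G} [hnorm : N.Normal]
include hG

theorem exists_mem_smul_eq_of_adj_smul {x : G} (hx : x ∈ N) {a : V} (ha : Γ.Adj a (x • a))
    {u v : V} (huv : Γ.Adj u v) : ∃ y ∈ N, y • u = v := by
  obtain ⟨g, hgu, hgv⟩ := hG.exists_smul_eq ha huv
  refine ⟨g * x * g⁻¹, hnorm.conj_mem x hx g, ?_⟩
  rw [mul_smul, mul_smul, ← hgu, inv_smul_smul, hgv]

theorem orbit_eq_univ_of_adj_smul (hconn : Γ.Connected) {x : G} (hx : x ∈ N) {a : V}
    (ha : Γ.Adj a (x • a)) : MulAction.orbit N a = Set.univ := by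
  refine Set.eq_univ_of_forall (hconn.induction_on_adj (fun u v huv hu => ?_)
    (MulAction.mem_orbit_self a))
  obtain ⟨y, hy, hyu⟩ := hG.exists_mem_smul_eq_of_adj_smul hx ha huv
  obtain ⟨z, rfl⟩ := hu
  refine ⟨⟨y, hy⟩ * z, ?_⟩
  change (⟨y, hy⟩ * z : N) • a = v
  rw [mul_smul]
  exact hyu

theorem card_dvd_card_of_adj_smul [Finite N] (hconn : Γ.Connected) {x : G} (hx : x ∈ N) {a : V}
    (ha : Γ.Adj a (x • a)) : Nat.card V ∣ Nat.card N := by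
  rw [← Set.ncard_univ, ← hG.orbit_eq_univ_of_adj_smul hconn hx ha,
    ← MulAction.index_stabilizer]
  exact Subgroup.index_dvd_card _

variable {p : ℕ} [Fact p.Prime] (hp : IsPGroup p N)
include hp

theorem smul_eq_of_adj {w : V} (hdeg : ¬p ∣ Nat.card (Γ.neighborSet w)) {x : G} (hx : x ∈ N)
    (hxw : x • w = w) {u : V} (hu : Γ.Adj w u) : x • u = u := by
  obtain ⟨u₀, hwu₀, hu₀⟩ := exists_adj_fixed_of_isPGroup
    (hp.to_subgroup (MulAction.stabilizer N w)) (fun h _ _ huv => hG.adj_smul _ huv)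
    (fun h => h.2) hdeg
  obtain ⟨g, hgw, hgu⟩ := hG.exists_smul_eq hwu₀ hu
  have hconj : g⁻¹ * x * g ∈ N := by simpa using hnorm.conj_mem x hx g⁻¹
  have hconj_w : (g⁻¹ * x * g) • w = w := by
    rw [mul_smul, mul_smul, hgw, hxw, inv_smul_eq_iff, hgw]
  have hconj_u₀ : (g⁻¹ * x * g) • u₀ = u₀ := hu₀ ⟨⟨_, hconj⟩, hconj_w⟩
  rw [mul_smul, mul_smul, inv_smul_eq_iff] at hconj_u₀
  rwa [← hgu]

theorem stabilizer_eq_bot [FaithfulSMul G V] (hconn : Γ.Connected)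
    (hdeg : ∀ v, ¬p ∣ Nat.card (Γ.neighborSet v)) (w : V) :
    MulAction.stabilizer N w = ⊥ := by
  refine (Subgroup.eq_bot_iff_forall _).2 fun x hxw =>
    Subtype.ext <| eq_of_smul_eq_smul (α := V) fun v => ?_
  have hfix : (x : G) • v = v :=
    hconn.induction_on_adj (P := fun v => (x : G) • v = v)
      (fun u _ huv hu => hG.smul_eq_of_adj hp (hdeg u) x.2 hu huv) hxw v
  exact hfix.trans (one_smul G v).symm

end IsArcTransitive

end SimpleGraph

/-- A normal 2-subgroup of an arc-transitive group of automorphisms of a connected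
pentavalent graph of order `4n` with `n > 1` odd has order at most 2. -/
theorem normal_two_subgroup_le_two
    {V : Type*} [Fintype V] (Γ : SimpleGraph V) [DecidableRel Γ.Adj]
    (n : ℕ) (hn : 1 < n) (hodd : Odd n)
    (hcard : Fintype.card V = 4 * n)
    (hconn : Γ.Connected) (hdeg : ∀ v : V, Γ.degree v = 5)
    (G : Subgroup (Γ ≃g Γ))
    (harc : ∀ ⦃u v u' v' : V⦄, Γ.Adj u v → Γ.Adj u' v' →
      ∃ g ∈ G, g • u = u' ∧ g • v = v')
    (N : Subgroup G) (hnorm : N.Normal) (k : ℕ) (hN : Nat.card N = 2 ^ k) :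
    Nat.card N ≤ 2 := by
  have hG : Γ.IsArcTransitive G :=
    { adj_smul := fun g _ _ huv => (g : Γ ≃g Γ).map_rel_iff.2 huv
      exists_smul_eq := fun _ _ _ _ huv hu'v' => by
        obtain ⟨g, hg, hgu, hgv⟩ := harc huv hu'v'
        exact ⟨⟨g, hg⟩, hgu, hgv⟩ }
  have : Finite N := Nat.finite_of_card_ne_zero (by simp [hN])
  have hdeg_odd : ∀ v, ¬2 ∣ Nat.card (Γ.neighborSet v) := fun v => by
    rw [Nat.card_eq_fintype_card, Γ.card_neighborSet_eq_degree, hdeg]; decide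
  have hfree := hG.stabilizer_eq_bot (IsPGroup.of_card hN) hconn hdeg_odd
  by_cases hedge_in_orbit : ∃ (x : N) (a : V), Γ.Adj a (x • a)
  · obtain ⟨x, a, ha⟩ := hedge_in_orbit
    have hdvd := hG.card_dvd_card_of_adj_smul hconn x.2 ha
    rw [Nat.card_eq_fintype_card, hcard, hN] at hdvd
    have : n = 1 := Nat.Coprime.eq_one_of_dvd (hodd.coprime_two_right.pow_right k)
      (dvd_of_mul_left_dvd hdvd)
    omega
  · push Not at hedge_in_orbit
    have hedges : Nat.card Γ.edgeSet = 2 * (5 * n) := by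
      have := Γ.sum_degrees_eq_twice_card_edges
      simp only [hdeg, Finset.sum_const, Finset.card_univ, hcard, smul_eq_mul] at this
      rw [Nat.card_eq_fintype_card, ← SimpleGraph.edgeFinset_card]
      omega
    have hdvd := SimpleGraph.card_dvd_card_edgeSet_of_free
      (fun (x : N) _ _ huv => hG.adj_smul x huv) hfree hedge_in_orbit
    rw [hN, hedges] at hdvd
    rw [hN]
    have hcop : Nat.Coprime (2 ^ k) (5 * n) :=
      Nat.Coprime.pow_left k ((by decide : Odd 5).mul hodd).coprime_two_left
    exact Nat.le_of_dvd two_pos (hcop.dvd_of_dvd_mul_right hdvd)
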